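/- For n = 5, the TSP polytope 𝒫₅ is a proper subset of the projection of Q̄₁ onto the y-variables: 𝒫₅ ⊊ { y : ∃ w ∈ ℝ^{4×4}, (w,y) ∈ Q̄₁ }; in particular Q̄₁ is not an extended formulation of 𝒫₅. -/

import Mathlib

/-- The assignment (Birkhoff) polytope `𝒜ₙ` (with `m = n - 1`): the set of
`m × m` doubly stochastic matrices.  Index `i : Fin m` stands for city `i+1`
(a city in `{1,…,m}`), index `r : Fin m` for stage/position `r+1`. -/
def assignmentPolytope (m : ℕ) : Set (Fin m → Fin m → ℝ) :=
  {w | (∀ i, ∑ r, w i r = 1) ∧ (∀ r, ∑ i, w i r = 1) ∧ ∀ i r, 0 ≤ w i r}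

/-- The polytope `Q̄₁`.  Cities are `Fin (m+1)` (city `0` is the depot, and
`i.succ : Fin (m+1)` is city `i+1` for `i : Fin m`).  The `y`-variables are
indexed by ordered pairs of distinct cities; the (nonexistent) diagonal
entries are pinned to `0`. -/
def Qbar1 (m : ℕ) :
    Set ((Fin m → Fin m → ℝ) × (Fin (m + 1) → Fin (m + 1) → ℝ)) :=
  {p |
    p.1 ∈ assignmentPolytope m ∧
    (∀ i, p.2 i i = 0) ∧
    (∀ i r : Fin m, r.val = 0 → p.2 0 i.succ = p.1 i r) ∧
    (∀ i r : Fin m, r.val = m - 1 → p.2 i.succ 0 = p.1 i r) ∧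
    (∀ i j r r' : Fin m, i ≠ j → r'.val = r.val + 1 →
      p.1 i r + p.1 j r' - p.2 i.succ j.succ ≤ 1) ∧
    (∑ i : Fin m, ∑ j : Fin m, if i = j then 0 else p.2 i.succ j.succ) = (m : ℝ) - 1 ∧
    (∀ i j, 0 ≤ p.2 i j)}

/-- The permutation matrix `ŵ` of a permutation `u` of `{1,…,m}`:
`ŵ_{ir} = 1` iff city `i+1` is visited at stage `r+1`, i.e. iff `i = u r`. -/
def permMatrix (m : ℕ) (u : Equiv.Perm (Fin m)) : Fin m → Fin m → ℝ :=
  fun i r => if i = u r then 1 else 0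

/-- The tour incidence vector `ȳ^u` of a permutation `u` of `{1,…,m}`:
`ȳ^u_{0,u(1)} = 1`, `ȳ^u_{u(m),0} = 1`, `ȳ^u_{u(q),u(q+1)} = 1` for
`q = 1,…,m−1`, and all other entries are `0`. -/
def tourVec (m : ℕ) (u : Equiv.Perm (Fin m)) : Fin (m + 1) → Fin (m + 1) → ℝ :=
  fun a b =>
    if (∃ r : Fin m, r.val = 0 ∧ a = 0 ∧ b = (u r).succ) ∨
        (∃ r : Fin m, r.val = m - 1 ∧ a = (u r).succ ∧ b = 0) ∨
        (∃ q q' : Fin m, q'.val = q.val + 1 ∧ a = (u q).succ ∧ b = (u q').succ)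
    then 1 else 0

/-- "The TSP polytope" `𝒫ₙ` (with `m = n - 1`): the convex hull of the tour
incidence vectors. -/
def tspPolytope (m : ℕ) : Set (Fin (m + 1) → Fin (m + 1) → ℝ) :=
  convexHull ℝ {y | ∃ u : Equiv.Perm (Fin m), y = tourVec m u}

/-- The cost `d(0,u(1)) + Σ_{q=1}^{m−1} d(u(q),u(q+1)) + d(u(m),0)` of the TSP
tour `0 → u(1) → … → u(m) → 0` associated with a permutation `u` of `{1,…,m}`. -/
def tourCost (m : ℕ) (d : Fin (m + 1) → Fin (m + 1) → ℝ) (u : Equiv.Perm (Fin m)) : ℝ :=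
  (∑ r : Fin m, if r.val = 0 then d 0 ((u r).succ) else 0) +
  (∑ q : Fin m, ∑ q' : Fin m, if q'.val = q.val + 1 then d ((u q).succ) ((u q').succ) else 0) +
  (∑ r : Fin m, if r.val = m - 1 then d ((u r).succ) 0 else 0)

/-! Each tour vector lies in `Q̄₁` together with its permutation matrix, and `Q̄₁` is convex,
so `𝒫ₙ` lies in the projection of `Q̄₁`. The inclusion is strict once `m ≥ 3`: `Q̄₁` bounds the
inner arcs `y_{ij}` (`i, j ≥ 1`) only from below and fixes only their total `m - 1`, so with the
uniform matrix `w = J/m` and depot arcs of weight `1/m` the whole mass `m - 1` can sit on a single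
arc, whereas every point of `𝒫ₙ` has all entries at most `1`. -/

section TourVectors

variable {m : ℕ} (u : Equiv.Perm (Fin m))

lemma permMatrix_mem_assignmentPolytope : permMatrix m u ∈ assignmentPolytope m := by
  refine ⟨fun i => ?_, fun r => ?_, fun i r => ?_⟩
  · simp only [permMatrix, ← Equiv.symm_apply_eq, Finset.sum_ite_eq, Finset.mem_univ, if_true]
  · simp only [permMatrix, Finset.sum_ite_eq', Finset.mem_univ, if_true]
  · unfold permMatrix; split <;> norm_num

lemma permMatrix_le_one (i r : Fin m) : permMatrix m u i r ≤ 1 := by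
  unfold permMatrix; split <;> norm_num

lemma tourVec_nonneg (a b : Fin (m + 1)) : 0 ≤ tourVec m u a b := by
  unfold tourVec; split <;> norm_num

lemma tourVec_le_one (a b : Fin (m + 1)) : tourVec m u a b ≤ 1 := by
  unfold tourVec; split <;> norm_num

lemma tourVec_self (a : Fin (m + 1)) : tourVec m u a a = 0 := by
  rw [tourVec, if_neg]
  rintro (⟨r, -, ha, hb⟩ | ⟨r, -, ha, hb⟩ | ⟨q, q', hq, ha, hb⟩)
  · exact Fin.succ_ne_zero _ (hb.symm.trans ha)
  · exact Fin.succ_ne_zero _ (ha.symm.trans hb)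
  · have : q = q' := u.injective (Fin.succ_injective _ (ha.symm.trans hb))
    omega

lemma tourVec_zero_succ (i r : Fin m) (hr : r.val = 0) :
    tourVec m u 0 i.succ = permMatrix m u i r := by
  rw [tourVec, permMatrix]
  by_cases h : i = u r
  · rw [if_pos (Or.inl ⟨r, hr, rfl, by rw [h]⟩), if_pos h]
  · rw [if_neg, if_neg h]
    rintro (⟨r', hr', -, hb⟩ | ⟨r', -, ha, -⟩ | ⟨p, p', -, ha, -⟩)
    · obtain rfl : r' = r := Fin.ext (by omega)
      exact h (Fin.succ_injective _ hb)
    · exact Fin.succ_ne_zero _ ha.symm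
    · exact Fin.succ_ne_zero _ ha.symm

lemma tourVec_succ_zero (i r : Fin m) (hr : r.val = m - 1) :
    tourVec m u i.succ 0 = permMatrix m u i r := by
  rw [tourVec, permMatrix]
  by_cases h : i = u r
  · rw [if_pos (Or.inr (Or.inl ⟨r, hr, by rw [h], rfl⟩)), if_pos h]
  · rw [if_neg, if_neg h]
    rintro (⟨r', -, ha, -⟩ | ⟨r', hr', ha, -⟩ | ⟨p, p', -, -, hb⟩)
    · exact Fin.succ_ne_zero _ ha
    · obtain rfl : r' = r := Fin.ext (by omega)
      exact h (Fin.succ_injective _ ha)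
    · exact Fin.succ_ne_zero _ hb.symm

lemma tourVec_apply_succ_apply_succ (q q' : Fin m) :
    tourVec m u (u q).succ (u q').succ = if q'.val = q.val + 1 then 1 else 0 := by
  by_cases h : q'.val = q.val + 1
  · rw [tourVec, if_pos (Or.inr (Or.inr ⟨q, q', h, rfl, rfl⟩)), if_pos h]
  · rw [tourVec, if_neg, if_neg h]
    rintro (⟨r, -, ha, -⟩ | ⟨r, -, -, hb⟩ | ⟨p, p', hp, ha, hb⟩)
    · exact Fin.succ_ne_zero _ ha
    · exact Fin.succ_ne_zero _ hb
    · obtain rfl := u.injective (Fin.succ_injective _ ha)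
      obtain rfl := u.injective (Fin.succ_injective _ hb)
      exact h hp

end TourVectors

lemma Fin.sum_sum_ite_val_eq_val_add_one (m : ℕ) (hm : m ≠ 0) :
    (∑ q : Fin m, ∑ q' : Fin m, if q'.val = q.val + 1 then (1 : ℝ) else 0) = m - 1 := by
  obtain ⟨k, rfl⟩ := Nat.exists_eq_succ_of_ne_zero hm
  have inner : ∀ q : Fin (k + 1),
      (∑ q' : Fin (k + 1), if q'.val = q.val + 1 then (1 : ℝ) else 0) =
        if q.val < k then 1 else 0 := by
    intro q
    rw [Fin.sum_univ_eq_sum_range (fun i => if i = q.val + 1 then (1 : ℝ) else 0),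
      Finset.sum_ite_eq']
    simp only [Finset.mem_range, Nat.add_lt_add_iff_right]
  simp only [inner]
  rw [Fin.sum_univ_eq_sum_range (fun i => if i < k then (1 : ℝ) else 0), Finset.sum_range_succ,
    Finset.sum_congr rfl fun i hi => if_pos (Finset.mem_range.mp hi)]
  simp

lemma sum_offDiag_tourVec {m : ℕ} (hm : m ≠ 0) (u : Equiv.Perm (Fin m)) :
    (∑ i : Fin m, ∑ j : Fin m, if i = j then 0 else tourVec m u i.succ j.succ) = (m : ℝ) - 1 := by
  rw [← Fin.sum_sum_ite_val_eq_val_add_one m hm, ← Equiv.sum_comp u]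
  refine Finset.sum_congr rfl fun q _ => ?_
  rw [← Equiv.sum_comp u]
  refine Finset.sum_congr rfl fun q' _ => ?_
  rw [tourVec_apply_succ_apply_succ]
  split_ifs with h <;> first | rfl | (cases u.injective h; omega)

lemma permMatrix_tourVec_mem_Qbar1 {m : ℕ} (hm : m ≠ 0) (u : Equiv.Perm (Fin m)) :
    (permMatrix m u, tourVec m u) ∈ Qbar1 m := by
  refine ⟨permMatrix_mem_assignmentPolytope u, tourVec_self u,
    tourVec_zero_succ u, tourVec_succ_zero u,
    fun i j r r' _ hr => ?_, sum_offDiag_tourVec hm u, tourVec_nonneg u⟩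
  dsimp only
  by_cases hi : i = u r
  · by_cases hj : j = u r'
    · subst hi hj
      rw [tourVec_apply_succ_apply_succ, if_pos hr]
      linarith [permMatrix_le_one u (u r) r, permMatrix_le_one u (u r') r']
    · have : permMatrix m u j r' = 0 := if_neg hj
      linarith [permMatrix_le_one u i r, tourVec_nonneg u i.succ j.succ]
  · have : permMatrix m u i r = 0 := if_neg hi
    linarith [permMatrix_le_one u j r', tourVec_nonneg u i.succ j.succ]

lemma convex_Qbar1 (m : ℕ) : Convex ℝ (Qbar1 m) := by
  intro p hp q hq a b ha hb hab
  obtain ⟨⟨hr1, hc1, hn1⟩, hd1, hA1, hB1, hI1, hS1, hY1⟩ := hp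
  obtain ⟨⟨hr2, hc2, hn2⟩, hd2, hA2, hB2, hI2, hS2, hY2⟩ := hq
  have hfst : ∀ i r, (a • p + b • q).1 i r = a * p.1 i r + b * q.1 i r := fun i r => rfl
  have hsnd : ∀ i j, (a • p + b • q).2 i j = a * p.2 i j + b * q.2 i j := fun i j => rfl
  refine ⟨⟨fun i => ?_, fun r => ?_, fun i r => ?_⟩, fun i => ?_, fun i r hr => ?_,
    fun i r hr => ?_, fun i j r r' hij hr => ?_, ?_, fun i j => ?_⟩
  · simp only [hfst, Finset.sum_add_distrib, ← Finset.mul_sum, hr1 i, hr2 i, mul_one, hab]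
  · simp only [hfst, Finset.sum_add_distrib, ← Finset.mul_sum, hc1 r, hc2 r, mul_one, hab]
  · rw [hfst]; have := hn1 i r; have := hn2 i r; positivity
  · rw [hsnd, hd1 i, hd2 i]; ring
  · rw [hsnd, hfst, hA1 i r hr, hA2 i r hr]
  · rw [hsnd, hfst, hB1 i r hr, hB2 i r hr]
  · rw [hsnd, hfst, hfst]
    nlinarith [mul_le_mul_of_nonneg_left (hI1 i j r r' hij hr) ha,
      mul_le_mul_of_nonneg_left (hI2 i j r r' hij hr) hb]
  · have hterm : ∀ i j : Fin m,
        (if i = j then 0 else (a • p + b • q).2 i.succ j.succ) =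
          a * (if i = j then 0 else p.2 i.succ j.succ) +
            b * (if i = j then 0 else q.2 i.succ j.succ) := by
      intro i j; rw [hsnd]; split_ifs <;> ring
    simp only [hterm, Finset.sum_add_distrib, ← Finset.mul_sum, hS1, hS2]
    rw [← add_mul, hab, one_mul]
  · rw [hsnd]; have := hY1 i j; have := hY2 i j; positivity

def projQbar1 (m : ℕ) : Set (Fin (m + 1) → Fin (m + 1) → ℝ) :=
  {y | ∃ w, (w, y) ∈ Qbar1 m}

lemma convex_projQbar1 (m : ℕ) : Convex ℝ (projQbar1 m) := by
  rintro y₁ ⟨w₁, h₁⟩ y₂ ⟨w₂, h₂⟩ a b ha hb hab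
  exact ⟨a • w₁ + b • w₂, convex_Qbar1 m h₁ h₂ ha hb hab⟩

lemma tspPolytope_subset_projQbar1 {m : ℕ} (hm : m ≠ 0) : tspPolytope m ⊆ projQbar1 m :=
  convexHull_min (by rintro _ ⟨u, rfl⟩; exact ⟨_, permMatrix_tourVec_mem_Qbar1 hm u⟩)
    (convex_projQbar1 m)

lemma apply_le_one_of_mem_tspPolytope {m : ℕ} {y : Fin (m + 1) → Fin (m + 1) → ℝ}
    (hy : y ∈ tspPolytope m) (a b : Fin (m + 1)) : y a b ≤ 1 := by
  refine convexHull_min (t := {z | z a b ≤ 1}) ?_ (convex_halfSpace_le ?_ 1) hy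
  · rintro _ ⟨u, rfl⟩
    exact tourVec_le_one u a b
  · exact (LinearMap.proj b ∘ₗ LinearMap.proj (R := ℝ) (φ := fun _ => Fin (m + 1) → ℝ) a).isLinear

noncomputable def concentratedPoint (m : ℕ) (i₀ j₀ : Fin m) : Fin (m + 1) → Fin (m + 1) → ℝ :=
  Fin.cons (Fin.cons 0 fun _ => (m : ℝ)⁻¹)
    fun i => Fin.cons (m : ℝ)⁻¹ fun j => if i = i₀ ∧ j = j₀ then (m : ℝ) - 1 else 0

lemma concentratedPoint_mem_Qbar1 {m : ℕ} (hm : 2 ≤ m) {i₀ j₀ : Fin m} (hij : i₀ ≠ j₀) :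
    ((fun _ _ => (m : ℝ)⁻¹), concentratedPoint m i₀ j₀) ∈ Qbar1 m := by
  have hm' : (2 : ℝ) ≤ m := by exact_mod_cast hm
  have hsum : ∑ _ : Fin m, (m : ℝ)⁻¹ = 1 := by
    rw [Finset.sum_const, Finset.card_univ, Fintype.card_fin, nsmul_eq_mul,
      mul_inv_cancel₀ (by positivity)]
  have hinv : (m : ℝ)⁻¹ ≤ 1 / 2 := by rw [one_div]; gcongr
  have hnonneg : ∀ a b, 0 ≤ concentratedPoint m i₀ j₀ a b := by
    intro a b
    cases a using Fin.cases <;> cases b using Fin.cases <;>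
      simp only [concentratedPoint, Fin.cons_zero, Fin.cons_succ] <;>
      first | positivity | (split_ifs <;> linarith)
  refine ⟨⟨fun _ => hsum, fun _ => hsum, fun _ _ => by positivity⟩, fun a => ?_,
    fun i r _ => by simp [concentratedPoint], fun i r _ => by simp [concentratedPoint],
    fun i j r r' _ _ => by linarith [hnonneg i.succ j.succ], ?_, hnonneg⟩
  · cases a using Fin.cases with
    | zero => simp [concentratedPoint]
    | succ i => simp only [concentratedPoint, Fin.cons_succ]; grind
  · have hoff : ∀ i j : Fin m, (if i = j then 0 else if i = i₀ ∧ j = j₀ then (m : ℝ) - 1 else 0) =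
        if i = i₀ ∧ j = j₀ then (m : ℝ) - 1 else 0 := by
      intro i j; split_ifs <;> grind
    simp only [concentratedPoint, Fin.cons_succ, hoff]
    simp [ite_and]

lemma tspPolytope_ssubset_projQbar1 {m : ℕ} (hm : 3 ≤ m) : tspPolytope m ⊂ projQbar1 m := by
  have hm' : (3 : ℝ) ≤ m := by exact_mod_cast hm
  let i₀ : Fin m := ⟨0, by omega⟩
  let j₀ : Fin m := ⟨1, by omega⟩
  refine (Set.ssubset_iff_of_subset (tspPolytope_subset_projQbar1 (by omega))).2
    ⟨concentratedPoint m i₀ j₀, ⟨_, concentratedPoint_mem_Qbar1 (by omega) (by simp [i₀, j₀])⟩,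
      fun hP => ?_⟩
  have := apply_le_one_of_mem_tspPolytope hP i₀.succ j₀.succ
  simp only [concentratedPoint, Fin.cons_succ, and_self, if_true] at this
  linarith

/-- For `n = 5`, the TSP polytope `𝒫₅` is a *proper* subset
of the projection of `Q̄₁` onto the `y`-variables; in particular that
projection does not equal `𝒫₅`, i.e. `Q̄₁` is not an extended formulation
of `𝒫₅`. -/
theorem tspPolytope_ssubset_proj_Qbar1_five :
    tspPolytope 4 ⊂
        {y : Fin 5 → Fin 5 → ℝ | ∃ w : Fin 4 → Fin 4 → ℝ, (w, y) ∈ Qbar1 4} ∧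
      {y : Fin 5 → Fin 5 → ℝ | ∃ w : Fin 4 → Fin 4 → ℝ, (w, y) ∈ Qbar1 4} ≠
        tspPolytope 4 := by
  have h : tspPolytope 4 ⊂ projQbar1 4 := tspPolytope_ssubset_projQbar1 (by norm_num)
  exact ⟨h, h.ne'⟩
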